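/- arXiv:2510.25354 — 2 statements merged into one kernel-verified Lean document; each statement's English description precedes it below -/
import Mathlib

section
/- Let u ∈ C³(ℝ^d), p ∈ {2} ∪ [3,∞), and ψ(t) = |t|^{p−2}t. Then there exists a constant C depending only on p and d such that for all x, z ∈ ℝ^d, |ψ(u(x+z) − u(x)) − |∇u(x)·z|^{p−2} ∇u(x)·z − ((p−1)/2) |∇u(x)·z|^{p−2} zᵀ∇²u(x)z| ≤ C ‖u‖_{C³}^{p−1} |z|^{p+1}. -/
/-!
Write `a = ∇u(x)·z`, `b = u(x+z) - u(x)` and `Q = zᵀ∇²u(x)z`. Taylor's formula along the segment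
gives `|b - a - Q/2| ≤ M|z|³` and the mean value theorem gives `|a|, |b| ≤ M|z|`; together they
force `|b - a| ≤ 2M|z|²` (from Taylor when `|z| ≤ 1`, trivially when `|z| ≥ 1`). For `p = 2` or
`p ≥ 3` the derivative `ψ'(t) = (p-1)|t|^{p-2}` is Lipschitz on `[-R, R]` with constant
`(p-1)(p-2)R^{p-3}`, so with `R = M|z|` the splitting
`ψ(b) - ψ(a) - ψ'(a) Q/2 = [ψ(b) - ψ(a) - ψ'(a)(b - a)] + ψ'(a)(b - a - Q/2)`
bounds the left-hand side by `(p-1)(p-2)(M|z|)^{p-3}(2M|z|²)² + (p-1)(M|z|)^{p-2}M|z|³`,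
which is `(p-1)(4p-7) M^{p-1}|z|^{p+1}`.
-/

open Set Filter Asymptotics Topology

section OneVariable
variable {F : Type*} [NormedAddCommGroup F] [NormedSpace ℝ F]

theorem norm_image_sub_le_of_norm_deriv_le_Icc01 {f f' : ℝ → F} {C : ℝ}
    (hf : ∀ t, HasDerivAt f (f' t) t) (bound : ∀ t ∈ Icc (0 : ℝ) 1, ‖f' t‖ ≤ C)
    {t : ℝ} (ht : t ∈ Icc (0 : ℝ) 1) : ‖f t - f 0‖ ≤ C := by
  have hC : 0 ≤ C := (norm_nonneg _).trans (bound 0 (left_mem_Icc.2 zero_le_one))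
  calc ‖f t - f 0‖ ≤ C * (t - 0) :=
        norm_image_sub_le_of_norm_deriv_le_segment' (fun s _ => (hf s).hasDerivWithinAt)
          (fun s hs => bound s (Ico_subset_Icc_self hs)) t ht
    _ ≤ C := by nlinarith [ht.2]

theorem norm_taylor_two_remainder_le_of_hasDerivAt {g g₁ g₂ g₃ : ℝ → F} {C : ℝ}
    (hg : ∀ t, HasDerivAt g (g₁ t) t) (hg₁ : ∀ t, HasDerivAt g₁ (g₂ t) t)
    (hg₂ : ∀ t, HasDerivAt g₂ (g₃ t) t) (bound : ∀ t ∈ Icc (0 : ℝ) 1, ‖g₃ t‖ ≤ C) :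
    ‖g 1 - g 0 - g₁ 0 - (1 / 2 : ℝ) • g₂ 0‖ ≤ C := by
  have h₂ : ∀ t ∈ Icc (0 : ℝ) 1, ‖g₂ t - g₂ 0‖ ≤ C := fun t =>
    norm_image_sub_le_of_norm_deriv_le_Icc01 hg₂ bound
  have h₁ : ∀ t ∈ Icc (0 : ℝ) 1, ‖g₁ t - g₁ 0 - t • g₂ 0‖ ≤ C := by
    have hd : ∀ t, HasDerivAt (fun t => g₁ t - g₁ 0 - t • g₂ 0) (g₂ t - g₂ 0) t := fun t => by
      simpa using ((hg₁ t).sub_const (g₁ 0)).fun_sub ((hasDerivAt_id t).smul_const (g₂ 0))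
    simpa using fun t => norm_image_sub_le_of_norm_deriv_le_Icc01 hd h₂
  have hd : ∀ t, HasDerivAt (fun t => g t - g 0 - t • g₁ 0 - (t ^ 2 / 2) • g₂ 0)
      (g₁ t - g₁ 0 - t • g₂ 0) t := fun t => by
    refine ((((hg t).sub_const (g 0)).fun_sub ((hasDerivAt_id' t).smul_const (g₁ 0))).fun_sub
      (((hasDerivAt_pow 2 t).div_const 2).smul_const (g₂ 0))).congr_deriv ?_
    rw [one_smul, show ((2 : ℕ) : ℝ) * t ^ (2 - 1) / 2 = t by norm_num]
  simpa using norm_image_sub_le_of_norm_deriv_le_Icc01 hd h₁ (right_mem_Icc.2 zero_le_one)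

end OneVariable

section Line
variable {E F : Type*} [NormedAddCommGroup E] [NormedSpace ℝ E]
  [NormedAddCommGroup F] [NormedSpace ℝ F]

theorem ContDiff.hasDerivAt_iteratedFDeriv_add_smul {n : WithTop ℕ∞} {f : E → F}
    (hf : ContDiff ℝ n f) {k : ℕ} (hk : k < n) (x z : E) (t : ℝ) :
    HasDerivAt (fun t : ℝ => iteratedFDeriv ℝ k f (x + t • z) (fun _ => z))
      (iteratedFDeriv ℝ (k + 1) f (x + t • z) (fun _ => z)) t := by
  have hline : HasDerivAt (fun t : ℝ => x + t • z) z t := by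
    simpa using ((hasDerivAt_id t).smul_const z).const_add x
  have hD :=
    ((hf.differentiable_iteratedFDeriv hk) (x + t • z)).hasFDerivAt.comp_hasDerivAt t hline
  rw [iteratedFDeriv_succ_apply_left]
  exact (ContinuousMultilinearMap.apply ℝ _ F (fun _ => z)).hasFDerivAt.comp_hasDerivAt t hD

theorem norm_iteratedFDeriv_apply_const_le {f : E → F} {n : ℕ} {y : E} {M : ℝ}
    (hM : ‖iteratedFDeriv ℝ n f y‖ ≤ M) (z : E) :
    ‖iteratedFDeriv ℝ n f y (fun _ => z)‖ ≤ M * ‖z‖ ^ n := by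
  simpa using (iteratedFDeriv ℝ n f y).le_mul_prod_of_opNorm_le_of_le (m := fun _ => z) hM
    (fun _ => le_rfl)

theorem ContDiff.norm_taylor_two_remainder_le {u : E → F} (hu : ContDiff ℝ 3 u) {M : ℝ}
    (hM : ∀ y, ‖iteratedFDeriv ℝ 3 u y‖ ≤ M) (x z : E) :
    ‖u (x + z) - u x - fderiv ℝ u x z - (1 / 2 : ℝ) • iteratedFDeriv ℝ 2 u x (fun _ => z)‖
      ≤ M * ‖z‖ ^ 3 := by
  have key := norm_taylor_two_remainder_le_of_hasDerivAt
    (hu.hasDerivAt_iteratedFDeriv_add_smul (k := 0) (by norm_num) x z)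
    (hu.hasDerivAt_iteratedFDeriv_add_smul (k := 1) (by norm_num) x z)
    (hu.hasDerivAt_iteratedFDeriv_add_smul (k := 2) (by norm_num) x z)
    (fun t _ => norm_iteratedFDeriv_apply_const_le (hM _) z)
  simpa [iteratedFDeriv_one_apply] using key

end Line

theorem hasDerivAt_abs_rpow_mul_self {q : ℝ} (hq : 0 < q) (t : ℝ) :
    HasDerivAt (fun s : ℝ => |s| ^ q * s) ((q + 1) * |t| ^ q) t := by
  rcases eq_or_ne t 0 with rfl | ht
  · rw [hasDerivAt_iff_isLittleO_nhds_zero]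
    have hlim : Tendsto (fun h : ℝ => |h| ^ q) (𝓝 0) (𝓝 0) := by
      simpa [Real.zero_rpow hq.ne'] using
        ((continuous_abs.rpow_const fun _ => Or.inr hq.le).tendsto (0 : ℝ))
    simpa [Real.zero_rpow hq.ne'] using
      (isLittleO_one_iff ℝ).2 hlim |>.mul_isBigO (isBigO_refl (fun h : ℝ => h) (𝓝 0))
  · have h := ((hasDerivAt_abs ht).rpow_const (p := q) (Or.inl (abs_ne_zero.2 ht))).mul
      (hasDerivAt_id' t)
    refine h.congr_deriv ?_
    have hsign : (SignType.sign t : ℝ) * t = |t| := sign_mul_self t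
    rw [Real.rpow_sub_one (abs_ne_zero.2 ht)]
    calc (SignType.sign t : ℝ) * q * (|t| ^ q / |t|) * t + |t| ^ q * 1
        = q * |t| ^ q * ((SignType.sign t : ℝ) * t / |t|) + |t| ^ q := by ring
      _ = (q + 1) * |t| ^ q := by rw [hsign, div_self (abs_ne_zero.2 ht)]; ring

theorem abs_abs_rpow_sub_abs_rpow_le {q R : ℝ} (hq : 1 ≤ q) {s t : ℝ} (hs : |s| ≤ R)
    (ht : |t| ≤ R) : |(|s| ^ q - |t| ^ q)| ≤ q * R ^ (q - 1) * |s - t| := by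
  have hmvt := (convex_Icc (0 : ℝ) R).norm_image_sub_le_of_norm_hasDerivWithin_le
    (f := fun x : ℝ => x ^ q) (f' := fun x : ℝ => q * x ^ (q - 1))
    (fun x _ => (Real.hasDerivAt_rpow_const (Or.inr hq)).hasDerivWithinAt)
    (fun x hx => by
      rw [Real.norm_eq_abs, abs_of_nonneg (mul_nonneg (by linarith) (Real.rpow_nonneg hx.1 _))]
      exact mul_le_mul_of_nonneg_left (Real.rpow_le_rpow hx.1 hx.2 (by linarith)) (by linarith))
    ⟨abs_nonneg t, ht⟩ ⟨abs_nonneg s, hs⟩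
  calc |(|s| ^ q - |t| ^ q)| ≤ q * R ^ (q - 1) * |(|s| - |t|)| := by simpa using hmvt
    _ ≤ q * R ^ (q - 1) * |s - t| := by
      have : 0 ≤ R ^ (q - 1) := Real.rpow_nonneg ((abs_nonneg s).trans hs) _
      exact mul_le_mul_of_nonneg_left (abs_abs_sub_abs_le_abs_sub s t) (by positivity)

theorem abs_sub_sub_mul_sub_le_of_abs_deriv_sub_le {f f' : ℝ → ℝ} {a b L : ℝ} (hL : 0 ≤ L)
    (hf : ∀ s ∈ uIcc a b, HasDerivAt f (f' s) s)
    (hf' : ∀ s ∈ uIcc a b, |f' s - f' a| ≤ L * |s - a|) :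
    |f b - f a - f' a * (b - a)| ≤ L * (b - a) ^ 2 := by
  have hmvt := (convex_uIcc a b).norm_image_sub_le_of_norm_hasDerivWithin_le
    (f := fun s => f s - f' a * s) (f' := fun s => f' s - f' a) (C := L * |b - a|)
    (fun s hs =>
      ((hf s hs).sub ((hasDerivAt_id' s).const_mul (f' a))).hasDerivWithinAt.congr_deriv (by ring))
    (fun s hs => (hf' s hs).trans (mul_le_mul_of_nonneg_left (abs_sub_left_of_mem_uIcc hs) hL))
    left_mem_uIcc right_mem_uIcc
  calc |f b - f a - f' a * (b - a)| = ‖f b - f' a * b - (f a - f' a * a)‖ := by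
        rw [Real.norm_eq_abs]; ring_nf
    _ ≤ L * |b - a| * |b - a| := hmvt
    _ = L * (b - a) ^ 2 := by rw [mul_assoc, ← sq, sq_abs]

theorem abs_abs_rpow_mul_self_sub_sub_le {q R : ℝ} (hq : q = 0 ∨ 1 ≤ q) {a b : ℝ}
    (ha : |a| ≤ R) (hb : |b| ≤ R) :
    |(|b| ^ q * b - |a| ^ q * a - (q + 1) * |a| ^ q * (b - a))|
      ≤ (q + 1) * q * R ^ (q - 1) * (b - a) ^ 2 := by
  rcases hq with rfl | hq
  · simp
  have hR : 0 ≤ R := (abs_nonneg a).trans ha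
  have hsub : uIcc a b ⊆ Icc (-R) R := uIcc_subset_Icc (abs_le.1 ha) (abs_le.1 hb)
  refine abs_sub_sub_mul_sub_le_of_abs_deriv_sub_le (by positivity)
    (fun s _ => hasDerivAt_abs_rpow_mul_self (by linarith) s) (fun s hs => ?_)
  calc |(q + 1) * |s| ^ q - (q + 1) * |a| ^ q| = (q + 1) * |(|s| ^ q - |a| ^ q)| := by
        rw [← mul_sub, abs_mul, abs_of_pos (by linarith)]
    _ ≤ (q + 1) * (q * R ^ (q - 1) * |s - a|) := by
        gcongr
        exact abs_abs_rpow_sub_abs_rpow_le hq (abs_le.2 (hsub hs)) ha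
    _ = (q + 1) * q * R ^ (q - 1) * |s - a| := by ring

theorem abs_sub_le_two_mul_sq {a b Q M s : ℝ} (hM : 0 ≤ M) (hs : 0 ≤ s) (ha : |a| ≤ M * s)
    (hb : |b| ≤ M * s) (hQ : |Q| ≤ M * s ^ 2) (hr : |b - a - Q / 2| ≤ M * s ^ 3) :
    |b - a| ≤ 2 * M * s ^ 2 := by
  rcases le_total s 1 with hs1 | hs1
  · have hs32 : M * s ^ 3 ≤ M * s ^ 2 :=
      mul_le_mul_of_nonneg_left (pow_le_pow_of_le_one hs hs1 (by norm_num : 2 ≤ 3)) hM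
    calc |b - a| = |Q / 2 + (b - a - Q / 2)| := by ring_nf
      _ ≤ |Q| / 2 + |b - a - Q / 2| := (abs_add_le _ _).trans_eq (by rw [abs_div, abs_two])
      _ ≤ 2 * M * s ^ 2 := by nlinarith
  · calc |b - a| ≤ |b| + |a| := abs_sub _ _
      _ ≤ 2 * (M * s) * 1 := by linarith
      _ ≤ 2 * (M * s) * s := by gcongr
      _ = 2 * M * s ^ 2 := by ring

theorem mul_rpow_mul_pow_mul_pow {M s y : ℝ} (hM : 0 ≤ M) (hs : 0 ≤ s) {m n : ℕ}
    (hm : y + m ≠ 0) (hn : y + n ≠ 0) :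
    (M * s) ^ y * (M ^ m * s ^ n) = M ^ (y + m) * s ^ (y + n) := by
  rw [Real.mul_rpow hM hs, Real.rpow_add_natCast' hM hm, Real.rpow_add_natCast' hs hn]
  ring

theorem abs_abs_rpow_mul_self_expansion_le {p a b Q M s : ℝ} (hp : p = 2 ∨ 3 ≤ p) (hM : 0 ≤ M)
    (hs : 0 ≤ s) (ha : |a| ≤ M * s) (hb : |b| ≤ M * s) (hQ : |Q| ≤ M * s ^ 2)
    (hr : |b - a - Q / 2| ≤ M * s ^ 3) :
    |(|b| ^ (p - 2) * b) - |a| ^ (p - 2) * a - (p - 1) / 2 * |a| ^ (p - 2) * Q|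
      ≤ (p - 1) * (4 * (p - 2) + 1) * M ^ (p - 1) * s ^ (p + 1) := by
  have hp1 : 1 ≤ p - 1 := by rcases hp with rfl | hp <;> linarith
  have hp2 : 0 ≤ p - 2 := by rcases hp with rfl | hp <;> linarith
  have hMs : 0 ≤ M * s := mul_nonneg hM hs
  have hψ := abs_abs_rpow_mul_self_sub_sub_le (q := p - 2)
    (hp.imp (fun h => by linarith) (fun h => by linarith)) ha hb
  rw [show p - 2 + 1 = p - 1 by ring, show p - 2 - 1 = p - 3 by ring] at hψ
  have hba := abs_sub_le_two_mul_sq hM hs ha hb hQ hr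
  have hremainder : (p - 1) * (p - 2) * (M * s) ^ (p - 3) * (b - a) ^ 2
      ≤ 4 * (p - 1) * (p - 2) * (M ^ (p - 1) * s ^ (p + 1)) := by
    calc (p - 1) * (p - 2) * (M * s) ^ (p - 3) * (b - a) ^ 2
        ≤ (p - 1) * (p - 2) * (M * s) ^ (p - 3) * (2 * M * s ^ 2) ^ 2 := by
          refine mul_le_mul_of_nonneg_left (sq_le_sq.2 (hba.trans (le_abs_self _))) ?_
          have := Real.rpow_nonneg hMs (p - 3)
          positivity
      _ = 4 * (p - 1) * (p - 2) * ((M * s) ^ (p - 3) * (M ^ 2 * s ^ 4)) := by ring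
      _ = 4 * (p - 1) * (p - 2) * (M ^ (p - 1) * s ^ (p + 1)) := by
          rw [mul_rpow_mul_pow_mul_pow hM hs (by push_cast; linarith) (by push_cast; linarith)]
          congr 3 <;> push_cast <;> ring
  have hlinear : (p - 1) * |a| ^ (p - 2) * |b - a - Q / 2|
      ≤ (p - 1) * (M ^ (p - 1) * s ^ (p + 1)) := by
    calc (p - 1) * |a| ^ (p - 2) * |b - a - Q / 2|
        ≤ (p - 1) * ((M * s) ^ (p - 2) * (M ^ 1 * s ^ 3)) := by
          rw [mul_assoc, pow_one]
          gcongr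
      _ = (p - 1) * (M ^ (p - 1) * s ^ (p + 1)) := by
          rw [mul_rpow_mul_pow_mul_pow hM hs (by push_cast; linarith) (by push_cast; linarith)]
          congr 3 <;> push_cast <;> ring
  calc |(|b| ^ (p - 2) * b) - |a| ^ (p - 2) * a - (p - 1) / 2 * |a| ^ (p - 2) * Q|
      = |(|b| ^ (p - 2) * b - |a| ^ (p - 2) * a - (p - 1) * |a| ^ (p - 2) * (b - a))
          + (p - 1) * |a| ^ (p - 2) * (b - a - Q / 2)| := by ring_nf
    _ ≤ |(|b| ^ (p - 2) * b - |a| ^ (p - 2) * a - (p - 1) * |a| ^ (p - 2) * (b - a))|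
          + (p - 1) * |a| ^ (p - 2) * |b - a - Q / 2| := by
        refine (abs_add_le _ _).trans_eq ?_
        rw [abs_mul, abs_mul, abs_of_nonneg (by linarith : 0 ≤ p - 1),
          abs_of_nonneg (Real.rpow_nonneg (abs_nonneg a) _)]
    _ ≤ (p - 1) * (4 * (p - 2) + 1) * M ^ (p - 1) * s ^ (p + 1) := by linarith

/-- Let `u ∈ C³(ℝ^d)`, `p ∈ {2} ∪ [3,∞)` and `ψ(t) = |t|^{p−2} t`. There is a constant `C`
depending only on `p` and `d` such that for every `u` with `‖u‖_{C³} ≤ M` (all derivatives up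
to order 3 bounded by `M`) and all `x, z ∈ ℝ^d`,
`|ψ(u(x+z) − u(x)) − |∇u(x)·z|^{p−2} ∇u(x)·z − ((p−1)/2)|∇u(x)·z|^{p−2} zᵀ∇²u(x)z|`
`≤ C ‖u‖_{C³}^{p−1} |z|^{p+1}`. -/
theorem stmt8 {d : ℕ} (p : ℝ) (hp : p = 2 ∨ 3 ≤ p) :
    ∃ C : ℝ, 0 < C ∧
      ∀ (u : EuclideanSpace ℝ (Fin d) → ℝ) (M : ℝ),
        ContDiff ℝ 3 u →
        (∀ i : ℕ, i ≤ 3 → ∀ x, ‖iteratedFDeriv ℝ i u x‖ ≤ M) →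
        ∀ x z : EuclideanSpace ℝ (Fin d),
          |(|u (x + z) - u x| ^ (p - 2) * (u (x + z) - u x))
              - |fderiv ℝ u x z| ^ (p - 2) * (fderiv ℝ u x z)
              - ((p - 1) / 2) * |fderiv ℝ u x z| ^ (p - 2)
                  * iteratedFDeriv ℝ 2 u x ![z, z]|
            ≤ C * M ^ (p - 1) * ‖z‖ ^ (p + 1) := by
  refine ⟨(p - 1) * (4 * (p - 2) + 1), by rcases hp with rfl | hp <;> nlinarith, ?_⟩
  intro u M hu hM x z
  have hM0 : 0 ≤ M := (norm_nonneg _).trans (hM 0 (by norm_num) x)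
  have hDu : ∀ y, ‖fderiv ℝ u y‖ ≤ M := fun y => by
    simpa using hM 1 (by norm_num) y
  have hzz : ![z, z] = fun _ => z := by
    ext i
    fin_cases i <;> rfl
  rw [hzz]
  refine abs_abs_rpow_mul_self_expansion_le hp hM0 (norm_nonneg z)
    ((fderiv ℝ u x).le_of_opNorm_le (hDu x) z) ?_
    (norm_iteratedFDeriv_apply_const_le (hM 2 (by norm_num) x) z) ?_
  · simpa using convex_univ.norm_image_sub_le_of_norm_fderiv_le
      (fun y _ => (hu.differentiable (by norm_num)) y) (fun y _ => hDu y) (mem_univ x)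
      (mem_univ (x + z))
  · simpa [div_eq_inv_mul] using hu.norm_taylor_two_remainder_le (fun y => hM 3 le_rfl y) x z
end

section
/- Let η : [0,∞) → [0,∞) be non-increasing with compact support, continuous and positive at 0, and let p > 1. Define σ^{(1,p)} = ∫_{ℝ^d} η(|z|) |z_d|^p dz and σ^{(1,p,1)} = ∫_{ℝ^d} η(|z|) |z_d|^{p−2} z_1² dz, where z_j denotes the j-th coordinate of z and d ≥ 2. Then σ^{(1,p)} = (p−1) σ^{(1,p,1)}. -/
/-!
Both integrands are a radial factor `η ‖z‖` times a function of `z` that is homogeneous of degree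
`p`, so polar coordinates factor each integral as a sphere integral times the same radial
integral of `η`. It therefore suffices to prove the identity for the Gaussian `η r = exp (-r ^ 2)`,
where the integrals split over the coordinates into moments
`∫ exp (-t ^ 2) |t| ^ s = Γ ((s + 1) / 2)`, and `Γ (x + 1) = x Γ (x)` produces the factor `p - 1`.
-/

open MeasureTheory Set Metric Real

lemma integral_exp_neg_sq_mul_abs_rpow {s : ℝ} (hs : -1 < s) :
    ∫ t : ℝ, exp (-t ^ 2) * |t| ^ s = Gamma ((s + 1) / 2) := by
  have hcomp : (fun t : ℝ ↦ exp (-t ^ 2) * |t| ^ s) = fun t ↦ exp (-|t| ^ 2) * |t| ^ s := by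
    simp only [sq_abs]
  have hIoi : ∫ t in Ioi (0 : ℝ), exp (-t ^ 2) * t ^ s =
      ∫ t in Ioi (0 : ℝ), t ^ s * exp (-t ^ (2 : ℝ)) :=
    setIntegral_congr_fun measurableSet_Ioi fun t _ ↦ by rw [mul_comm, rpow_two]
  rw [hcomp, integral_comp_abs (f := fun u ↦ exp (-u ^ 2) * u ^ s), hIoi,
    integral_rpow_mul_exp_neg_rpow two_pos hs]
  ring

lemma integral_exp_neg_sq_mul_abs_rpow_add_two {s : ℝ} (hs : -1 < s) :
    ∫ t : ℝ, exp (-t ^ 2) * |t| ^ (s + 2) = (s + 1) / 2 * ∫ t : ℝ, exp (-t ^ 2) * |t| ^ s := by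
  rw [integral_exp_neg_sq_mul_abs_rpow hs, integral_exp_neg_sq_mul_abs_rpow (by linarith),
    show (s + 2 + 1) / 2 = (s + 1) / 2 + 1 by ring, Gamma_add_one (by linarith)]

lemma integral_exp_neg_sq_mul_sq :
    ∫ t : ℝ, exp (-t ^ 2) * t ^ 2 = 1 / 2 * ∫ t : ℝ, exp (-t ^ 2) := by
  simpa only [zero_add, rpow_two, sq_abs, rpow_zero, mul_one] using
    integral_exp_neg_sq_mul_abs_rpow_add_two (s := 0) (by norm_num)

lemma Fintype.prod_eq_mul_mul_prod_compl_pair {ι M : Type*} [Fintype ι] [DecidableEq ι]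
    [CommMonoid M] (f : ι → M) {j k : ι} (hjk : j ≠ k) :
    ∏ i, f i = f j * f k * ∏ i ∈ {j, k}ᶜ, f i := by
  rw [← Finset.prod_mul_prod_compl {j, k}, Finset.prod_pair hjk]

lemma integral_Ioi_pow_mul_exp_neg_sq_mul_rpow (n : ℕ) {q : ℝ} (hq : -1 < q + n) :
    ∫ r in Ioi (0 : ℝ), r ^ n * (exp (-r ^ 2) * r ^ q) = Gamma ((q + n + 1) / 2) / 2 := by
  have hintegrand : ∀ r ∈ Ioi (0 : ℝ),
      r ^ n * (exp (-r ^ 2) * r ^ q) = r ^ (q + n) * exp (-r ^ (2 : ℝ)) := fun r hr ↦ by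
    rw [rpow_add hr, rpow_natCast, rpow_two]
    ring
  rw [setIntegral_congr_fun measurableSet_Ioi hintegrand,
    integral_rpow_mul_exp_neg_rpow two_pos hq]
  ring

lemma MeasureTheory.Measure.integral_volumeIoiPow (n : ℕ) (g : ℝ → ℝ) :
    ∫ x : Ioi (0 : ℝ), g x ∂volumeIoiPow n = ∫ r in Ioi (0 : ℝ), r ^ n * g r := by
  simp only [volumeIoiPow, ENNReal.ofReal]
  rw [integral_withDensity_eq_integral_smul ((measurable_subtype_coe.pow_const _).real_toNNReal),
    integral_subtype_comap measurableSet_Ioi fun a : ℝ ↦ (a ^ n).toNNReal • g a]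
  refine setIntegral_congr_fun measurableSet_Ioi fun x hx ↦ ?_
  rw [NNReal.smul_def, Real.coe_toNNReal _ (pow_nonneg (le_of_lt hx) _), smul_eq_mul]

section Polar

variable {E : Type*} [NormedAddCommGroup E] [NormedSpace ℝ E] [Nontrivial E] [MeasurableSpace E]
  [BorelSpace E] [FiniteDimensional ℝ E] (μ : Measure E) [μ.IsAddHaarMeasure]

/- No integrability assumption is needed, because `integral_prod_mul` holds unconditionally. -/
lemma integral_fun_norm_mul_of_homogeneous {Q : E → ℝ} {q : ℝ}
    (hQ : ∀ r : ℝ, 0 < r → ∀ z : E, Q (r • z) = r ^ q * Q z) (f : ℝ → ℝ) :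
    ∫ x, f ‖x‖ * Q x ∂μ = (∫ ω, Q ω ∂μ.toSphere) *
      ∫ r in Ioi (0 : ℝ), r ^ (Module.finrank ℝ E - 1) * (f r * r ^ q) := by
  rw [← Measure.integral_volumeIoiPow, ← integral_prod_mul]
  calc
    ∫ x, f ‖x‖ * Q x ∂μ = ∫ x : ({0}ᶜ : Set E), f ‖(x : E)‖ * Q x ∂(μ.comap (↑)) := by
      rw [integral_subtype_comap (measurableSet_singleton _).compl fun x : E ↦ f ‖x‖ * Q x,
        restrict_compl_singleton]
    _ = ∫ y : sphere (0 : E) 1 × Ioi (0 : ℝ),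
          f ‖((homeomorphUnitSphereProd E).symm y : E)‖ * Q ((homeomorphUnitSphereProd E).symm y)
          ∂(μ.toSphere.prod (.volumeIoiPow (Module.finrank ℝ E - 1))) := by
      rw [← μ.measurePreserving_homeomorphUnitSphereProd.integral_comp
        (Homeomorph.measurableEmbedding _)]
      simp only [Homeomorph.symm_apply_apply]
    _ = _ := by
      refine integral_congr_ae (.of_forall fun ⟨ω, r⟩ ↦ ?_)
      have hω : ‖(ω : E)‖ = 1 := mem_sphere_zero_iff_norm.mp ω.2
      simp only [homeomorphUnitSphereProd_symm_apply_coe]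
      rw [norm_smul, hω, Real.norm_eq_abs, abs_of_pos r.2, mul_one, hQ r r.2]
      ring

lemma integral_fun_norm_mul_eq_of_gaussian {Q₁ Q₂ : E → ℝ} {q c : ℝ}
    (hq : -(Module.finrank ℝ E : ℝ) < q)
    (hQ₁ : ∀ r : ℝ, 0 < r → ∀ z : E, Q₁ (r • z) = r ^ q * Q₁ z)
    (hQ₂ : ∀ r : ℝ, 0 < r → ∀ z : E, Q₂ (r • z) = r ^ q * Q₂ z)
    (hgauss : ∫ x, exp (-‖x‖ ^ 2) * Q₁ x ∂μ = c * ∫ x, exp (-‖x‖ ^ 2) * Q₂ x ∂μ) (f : ℝ → ℝ) :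
    ∫ x, f ‖x‖ * Q₁ x ∂μ = c * ∫ x, f ‖x‖ * Q₂ x ∂μ := by
  have hdim : ((Module.finrank ℝ E - 1 : ℕ) : ℝ) = Module.finrank ℝ E - 1 := by
    rw [Nat.cast_sub Module.finrank_pos, Nat.cast_one]
  have hradial : ∫ r in Ioi (0 : ℝ),
      r ^ (Module.finrank ℝ E - 1) * (exp (-r ^ 2) * r ^ q) ≠ 0 := by
    rw [integral_Ioi_pow_mul_exp_neg_sq_mul_rpow _ (by rw [hdim]; linarith)]
    exact div_ne_zero (Gamma_pos_of_pos (by rw [hdim]; linarith)).ne' two_ne_zero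
  have hsphere : ∫ ω, Q₁ ω ∂μ.toSphere = c * ∫ ω, Q₂ ω ∂μ.toSphere := by
    apply mul_right_cancel₀ hradial
    rw [mul_assoc, ← integral_fun_norm_mul_of_homogeneous μ hQ₁ fun r ↦ exp (-r ^ 2),
      ← integral_fun_norm_mul_of_homogeneous μ hQ₂ fun r ↦ exp (-r ^ 2), hgauss]
  rw [integral_fun_norm_mul_of_homogeneous μ hQ₁, integral_fun_norm_mul_of_homogeneous μ hQ₂,
    hsphere, mul_assoc]

end Polar

namespace EuclideanSpace

variable {ι : Type*} [Fintype ι]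

lemma integral_prod_apply (g : ι → ℝ → ℝ) :
    ∫ z : EuclideanSpace ℝ ι, ∏ i, g i (z i) = ∏ i, ∫ t : ℝ, g i t := by
  rw [← integral_fintype_prod_eq_prod g]
  exact (volume_preserving_symm_measurableEquiv_toLp ι).integral_comp' fun x ↦ ∏ i, g i (x i)

lemma exp_neg_norm_sq (z : EuclideanSpace ℝ ι) :
    exp (-‖z‖ ^ 2) = ∏ i, exp (-z i ^ 2) := by
  rw [← exp_sum, EuclideanSpace.norm_eq, sq_sqrt (by positivity)]
  simp [Finset.sum_neg_distrib]

lemma integral_exp_neg_norm_sq_mul_apply_mul_apply {j k : ι} (hjk : j ≠ k)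
    (a b : ℝ → ℝ) :
    ∫ z : EuclideanSpace ℝ ι, exp (-‖z‖ ^ 2) * (a (z j) * b (z k)) =
      (∫ t, exp (-t ^ 2) * a t) * (∫ t, exp (-t ^ 2) * b t) *
        (∫ t, exp (-t ^ 2)) ^ (Fintype.card ι - 2) := by
  classical
  let g : ι → ℝ → ℝ := fun i t ↦ exp (-t ^ 2) * if i = j then a t else if i = k then b t else 1
  have hg : ∀ i ∈ ({j, k}ᶜ : Finset ι), g i = fun t ↦ exp (-t ^ 2) := fun i hi ↦ by
    simp only [Finset.mem_compl, Finset.mem_insert, Finset.mem_singleton, not_or] at hi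
    simp [g, hi.1, hi.2]
  have hcard : ({j, k}ᶜ : Finset ι).card = Fintype.card ι - 2 := by
    rw [Finset.card_compl, Finset.card_pair hjk]
  calc ∫ z : EuclideanSpace ℝ ι, exp (-‖z‖ ^ 2) * (a (z j) * b (z k))
      = ∫ z : EuclideanSpace ℝ ι, ∏ i, g i (z i) := by
        congr 1 with z
        rw [Fintype.prod_eq_mul_mul_prod_compl_pair _ hjk, Finset.prod_congr rfl
          fun i hi ↦ congrFun (hg i hi) (z i), exp_neg_norm_sq,
          Fintype.prod_eq_mul_mul_prod_compl_pair _ hjk]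
        simp only [g, ↓reduceIte, if_neg hjk.symm]
        ring
    _ = _ := by
        rw [integral_prod_apply, Fintype.prod_eq_mul_mul_prod_compl_pair _ hjk,
          Finset.prod_congr rfl fun i hi ↦ congrArg _ (hg i hi), Finset.prod_const, hcard]
        simp only [g, ↓reduceIte, if_neg hjk.symm]

lemma integral_exp_neg_norm_sq_mul_abs_rpow {j k : ι} (hjk : j ≠ k)
    {p : ℝ} (hp : 1 < p) :
    ∫ z : EuclideanSpace ℝ ι, exp (-‖z‖ ^ 2) * |z j| ^ p =
      (p - 1) * ∫ z : EuclideanSpace ℝ ι, exp (-‖z‖ ^ 2) * (|z j| ^ (p - 2) * z k ^ 2) := by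
  have h₁ := integral_exp_neg_norm_sq_mul_apply_mul_apply hjk (|·| ^ p) fun _ ↦ 1
  have h₂ := integral_exp_neg_norm_sq_mul_apply_mul_apply hjk (|·| ^ (p - 2)) (· ^ 2)
  simp only [mul_one] at h₁ h₂
  have hmoment := integral_exp_neg_sq_mul_abs_rpow_add_two (s := p - 2) (by linarith)
  rw [sub_add_cancel] at hmoment
  rw [h₁, h₂, integral_exp_neg_sq_mul_sq, hmoment]
  ring

theorem integral_fun_norm_mul_abs_rpow {j k : ι} (hjk : j ≠ k) {p : ℝ} (hp : 1 < p)
    (f : ℝ → ℝ) :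
    ∫ z : EuclideanSpace ℝ ι, f ‖z‖ * |z j| ^ p =
      (p - 1) * ∫ z : EuclideanSpace ℝ ι, f ‖z‖ * (|z j| ^ (p - 2) * z k ^ 2) := by
  have : Nonempty ι := ⟨j⟩
  have hdim : -(Module.finrank ℝ (EuclideanSpace ℝ ι) : ℝ) < p := by
    have := (Module.finrank ℝ (EuclideanSpace ℝ ι)).cast_nonneg (α := ℝ)
    linarith
  refine integral_fun_norm_mul_eq_of_gaussian volume hdim (fun r hr z ↦ ?_) (fun r hr z ↦ ?_)
    (integral_exp_neg_norm_sq_mul_abs_rpow hjk hp) f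
  · rw [PiLp.smul_apply, smul_eq_mul, abs_mul, abs_of_pos hr, mul_rpow hr.le (abs_nonneg _)]
  · have hr2 : r ^ p = r ^ (p - 2) * r ^ 2 := by
      rw [← rpow_natCast, ← rpow_add hr]
      norm_num
    rw [PiLp.smul_apply, PiLp.smul_apply, smul_eq_mul, smul_eq_mul, abs_mul, abs_of_pos hr,
      mul_rpow hr.le (abs_nonneg _), mul_pow, hr2]
    ring

end EuclideanSpace

/-- Let `η : [0,∞) → [0,∞)` be non-increasing, compactly supported, continuous and positive
at `0`, let `d ≥ 2` and `p > 1`. With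
`σ^{(1,p)} = ∫_{ℝ^d} η(|z|)|z_d|^p dz` and `σ^{(1,p,1)} = ∫_{ℝ^d} η(|z|)|z_d|^{p−2} z_1² dz`,
one has `σ^{(1,p)} = (p−1) σ^{(1,p,1)}`. -/
theorem stmt9 (d : ℕ) (hd : 2 ≤ d) (η : ℝ → ℝ)
    (p : ℝ) (hp : 1 < p) :
    (∫ z : EuclideanSpace ℝ (Fin d), η ‖z‖ * |z ⟨d - 1, by omega⟩| ^ p)
      = (p - 1) *
        ∫ z : EuclideanSpace ℝ (Fin d),
          η ‖z‖ * |z ⟨d - 1, by omega⟩| ^ (p - 2) * (z ⟨0, by omega⟩) ^ 2 := by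
  simp_rw [mul_assoc]
  exact EuclideanSpace.integral_fun_norm_mul_abs_rpow (by simp [Fin.ext_iff]; omega) hp η
end
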